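/- Linear dyadic Carleson embedding: let P₀ be a dyadic cube and (α_Q) a Carleson sequence on the dyadic subcubes of P₀ with constant ‖α‖. Then for every g ∈ L²(P₀), Σ_{Q ∈ 𝒟(P₀)} α_Q ⟨g⟩_Q² |Q| ≤ 4 ‖α‖ ‖g‖²_{L²(P₀)}, where ⟨g⟩_Q = (1/|Q|)∫_Q g. -/

import Mathlib

open MeasureTheory ENNReal Set
noncomputable section

/-- A dyadic cube in `ℝ^d`: generation `gen` (side length `2^{-gen}`) and
position `pos` (lower-left corner `pos * 2^{-gen}`). -/
structure DyadicCube (d : ℕ) where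
  gen : ℤ
  pos : Fin d → ℤ

namespace DyadicCube
variable {d : ℕ}

/-- The half-open cube represented by `Q`. -/
def toSet (Q : DyadicCube d) : Set (Fin d → ℝ) :=
  {x | ∀ i, (Q.pos i : ℝ) * (2 : ℝ) ^ (-Q.gen) ≤ x i ∧
        x i < ((Q.pos i : ℝ) + 1) * (2 : ℝ) ^ (-Q.gen)}

/-- Lebesgue measure of the cube. -/
def vol (Q : DyadicCube d) : ℝ≥0∞ := volume Q.toSet

/-- The dyadic parent of a cube. -/
def parent (Q : DyadicCube d) : DyadicCube d :=
  ⟨Q.gen - 1, fun i => Int.fdiv (Q.pos i) 2⟩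

/-- The `m`-th dyadic ancestor of a cube. -/
def ancestor (m : ℕ) (Q : DyadicCube d) : DyadicCube d := parent^[m] Q

/-- `Q.In P`: `Q` is a dyadic subcube of `P`. -/
def In (Q P : DyadicCube d) : Prop := P.gen ≤ Q.gen ∧ Q.toSet ⊆ P.toSet

/-- Average of a nonnegative (extended-real-valued) function over a cube. -/
def avg (Q : DyadicCube d) (f : (Fin d → ℝ) → ℝ≥0∞) : ℝ≥0∞ :=
  (∫⁻ x in Q.toSet, f x) / Q.vol

/-- Average of a real-valued function over a cube. -/
def avgR (Q : DyadicCube d) (f : (Fin d → ℝ) → ℝ) : ℝ :=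
  (∫ x in Q.toSet, f x) / (Q.vol).toReal

/-- `α` is a Carleson sequence on `𝒟(P₀)` with constant `C`. -/
def Carleson (P₀ : DyadicCube d) (α : DyadicCube d → ℝ≥0∞) (C : ℝ≥0∞) : Prop :=
  ∀ P : DyadicCube d, P.In P₀ →
    ∑' Q : {Q : DyadicCube d // Q.In P}, α Q.1 * Q.1.vol ≤ C * P.vol

/-- Real-valued version of the Carleson condition. -/
def CarlesonR (P₀ : DyadicCube d) (α : DyadicCube d → ℝ) (C : ℝ) : Prop :=
  ∀ P : DyadicCube d, P.In P₀ →
    ∑' Q : {Q : DyadicCube d // Q.In P}, α Q.1 * (Q.1.vol).toReal ≤ C * (P.vol).toReal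

/-- `η`-sparse collection of dyadic cubes. -/
def Sparse (η : ℝ≥0∞) (S : Set (DyadicCube d)) : Prop :=
  ∃ E : DyadicCube d → Set (Fin d → ℝ),
    (∀ Q ∈ S, MeasurableSet (E Q) ∧ E Q ⊆ Q.toSet ∧ η * Q.vol ≤ volume (E Q)) ∧
    S.Pairwise fun Q Q' => Disjoint (E Q) (E Q')

/-- The `k`-linear positive dyadic shift of complexity `m` on `𝒟(P₀)`. -/
def shift (P₀ : DyadicCube d) (α : DyadicCube d → ℝ≥0∞) (m : ℕ) {k : ℕ}
    (f : Fin k → (Fin d → ℝ) → ℝ≥0∞) (x : Fin d → ℝ) : ℝ≥0∞ :=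
  ∑' Q : {Q : DyadicCube d // Q.In P₀ ∧ P₀.gen + m ≤ Q.gen},
    α Q.1 * (∏ i, (ancestor m Q.1).avg (f i)) * Q.1.toSet.indicator 1 x

/-- The sliced shift `𝒜^{m;0}_{P,α}`, summing only over generations `jm`, `j ≥ 1`,
relative to `P`. -/
def slicedShift (P : DyadicCube d) (α : DyadicCube d → ℝ≥0∞) (m : ℕ) {k : ℕ}
    (f : Fin k → (Fin d → ℝ) → ℝ≥0∞) (x : Fin d → ℝ) : ℝ≥0∞ :=
  ∑' Q : {Q : DyadicCube d // Q.In P ∧ ∃ j : ℕ, 1 ≤ j ∧ Q.gen = P.gen + j * m},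
    α Q.1 * (∏ i, (ancestor m Q.1).avg (f i)) * Q.1.toSet.indicator 1 x

/-- Real-valued `k`-linear positive dyadic shift of complexity `m`. -/
def shiftR (P₀ : DyadicCube d) (α : DyadicCube d → ℝ) (m : ℕ) {k : ℕ}
    (f : Fin k → (Fin d → ℝ) → ℝ) (x : Fin d → ℝ) : ℝ :=
  ∑' Q : {Q : DyadicCube d // Q.In P₀ ∧ P₀.gen + m ≤ Q.gen},
    α Q.1 * (∏ i, (ancestor m Q.1).avgR (f i)) * Q.1.toSet.indicator 1 x

/-- Real-valued sliced shift `𝒜^{m;0}_{P,α}`. -/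
def slicedShiftR (P : DyadicCube d) (α : DyadicCube d → ℝ) (m : ℕ) {k : ℕ}
    (f : Fin k → (Fin d → ℝ) → ℝ) (x : Fin d → ℝ) : ℝ :=
  ∑' Q : {Q : DyadicCube d // Q.In P ∧ ∃ j : ℕ, 1 ≤ j ∧ Q.gen = P.gen + j * m},
    α Q.1 * (∏ i, (ancestor m Q.1).avgR (f i)) * Q.1.toSet.indicator 1 x

/-- The positive sparse operator `𝒜⁰_𝒮`. -/
def sparseOp (S : Set (DyadicCube d)) {k : ℕ}
    (f : Fin k → (Fin d → ℝ) → ℝ≥0∞) (x : Fin d → ℝ) : ℝ≥0∞ :=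
  ∑' Q : S, (∏ i, (Q : DyadicCube d).avg (f i)) * (Q : DyadicCube d).toSet.indicator 1 x

end DyadicCube

open DyadicCube

/-!
By the layer cake formula, `∑ α_Q ⟨g⟩_Q² |Q| = 2 ∫₀^∞ t ∑_{⟨g⟩_Q > t} α_Q |Q| dt`. The cubes with
`⟨g⟩_Q > t` are covered by their maximal ones, which are pairwise disjoint with union `{Mg > t}`,
`M` the dyadic maximal function. The Carleson condition on each maximal cube gives
`∑_{⟨g⟩_Q > t} α_Q |Q| ≤ ‖α‖ |{Mg > t}|`, so the sum is at most `‖α‖ ∫ (Mg)²`. The average of `g`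
on a maximal cube exceeds `t`, so `t |{Mg > t}| ≤ ∫_{Mg > t} g`, and the layer cake formula gives
`∫ (Mg)² ≤ 2 ∫ g Mg`; with `4 g Mg ≤ 4 g² + (Mg)²` this becomes Doob's `∫ (Mg)² ≤ 4 ∫ g²` once
`∫ (Mg)²` is finite. That is arranged by using only cubes at most `N` generations below `P₀`,
where the averages are bounded, and letting `N → ∞`.
-/

lemma ENNReal.four_mul_mul_le_four_mul_sq_add_sq (a b : ℝ≥0∞) :
    4 * (a * b) ≤ 4 * a ^ 2 + b ^ 2 := by
  rcases eq_or_ne a ⊤ with rfl | ha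
  · simp
  rcases eq_or_ne b ⊤ with rfl | hb
  · simp
  lift a to NNReal using ha
  lift b to NNReal using hb
  norm_cast
  calc 4 * (a * b) = 2 * (2 * a) * b := by ring
    _ ≤ (2 * a) ^ 2 + b ^ 2 := two_mul_le_add_sq _ _
    _ = 4 * a ^ 2 + b ^ 2 := by ring

lemma ENNReal.tsum_iSup_of_monotone {ι κ : Type*} [Preorder κ] [IsDirectedOrder κ]
    {f : ι → κ → ℝ≥0∞} (hf : ∀ i, Monotone (f i)) :
    ∑' i, ⨆ n, f i n = ⨆ n, ∑' i, f i n := by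
  simp_rw [ENNReal.tsum_eq_iSup_sum, ENNReal.finsetSum_iSup_of_monotone hf]
  exact iSup_comm

section

variable {α : Type*} [MeasurableSpace α] {μ : Measure α}

lemma lintegral_ne_top_of_lintegral_sq_ne_top [IsFiniteMeasure μ] {g : α → ℝ≥0∞}
    (h : ∫⁻ x, g x ^ 2 ∂μ ≠ ⊤) : ∫⁻ x, g x ∂μ ≠ ⊤ := by
  have hle : ∀ x, g x ≤ 1 + g x ^ 2 := fun x => by
    rcases le_total (g x) 1 with h1 | h1
    · exact h1.trans le_self_add
    · calc g x = g x * 1 := (mul_one _).symm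
        _ ≤ g x ^ 2 := by rw [sq]; gcongr
        _ ≤ 1 + g x ^ 2 := le_add_self
  refine ne_top_of_le_ne_top ?_ (lintegral_mono hle)
  rw [lintegral_add_left measurable_const]
  simpa [measure_ne_top] using h

lemma measurableSet_ofReal_lt (a : ℝ≥0∞) : MeasurableSet {t : ℝ | ENNReal.ofReal t < a} :=
  measurableSet_lt ENNReal.measurable_ofReal measurable_const

lemma setOf_ofReal_lt_inter_Ioi {a : ℝ≥0∞} (ha : a ≠ ⊤) :
    {t : ℝ | ENNReal.ofReal t < a} ∩ Ioi 0 = Ioo 0 a.toReal := by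
  ext t
  simp only [mem_inter_iff, mem_ofPred_eq, mem_Ioi, mem_Ioo]
  constructor
  · rintro ⟨hlt, ht⟩
    exact ⟨ht, (ENNReal.ofReal_lt_iff_lt_toReal ht.le ha).mp hlt⟩
  · rintro ⟨ht, hlt⟩
    exact ⟨(ENNReal.ofReal_lt_iff_lt_toReal ht.le ha).mpr hlt, ht⟩

lemma setLIntegral_Ioi_indicator_ofReal_lt_one (a : ℝ≥0∞) :
    ∫⁻ t in Ioi (0 : ℝ), {t : ℝ | ENNReal.ofReal t < a}.indicator 1 t = a := by
  rw [lintegral_indicator_one (measurableSet_ofReal_lt a),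
    Measure.restrict_apply (measurableSet_ofReal_lt a)]
  rcases eq_or_ne a ⊤ with rfl | ha
  · simp
  · rw [setOf_ofReal_lt_inter_Ioi ha, Real.volume_Ioo, sub_zero, ENNReal.ofReal_toReal ha]

lemma two_mul_setLIntegral_Ioi_indicator_ofReal_lt (a : ℝ≥0∞) :
    2 * ∫⁻ t in Ioi (0 : ℝ), {t : ℝ | ENNReal.ofReal t < a}.indicator ENNReal.ofReal t =
      a ^ 2 := by
  rw [lintegral_indicator (measurableSet_ofReal_lt a),
    Measure.restrict_restrict (measurableSet_ofReal_lt a)]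
  rcases eq_or_ne a ⊤ with rfl | ha
  · have h : ∫⁻ _ in Ioi (1 : ℝ), 1 ≤ ∫⁻ t in Ioi (0 : ℝ), ENNReal.ofReal t :=
      (setLIntegral_mono ENNReal.measurable_ofReal fun t ht => by
        simpa using ENNReal.ofReal_le_ofReal (le_of_lt ht)).trans
        (lintegral_mono_set (Ioi_subset_Ioi zero_le_one))
    simp_all
  · set c := a.toReal
    have hc : 0 ≤ c := ENNReal.toReal_nonneg
    have hint : IntegrableOn (fun t : ℝ => t) (Ioo 0 c) :=
      continuous_id.integrableOn_Icc.mono_set Ioo_subset_Icc_self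
    rw [setOf_ofReal_lt_inter_Ioi ha, ← ofReal_integral_eq_lintegral_ofReal hint
      (ae_restrict_of_forall_mem measurableSet_Ioo fun t ht => ht.1.le),
      ← integral_Ioc_eq_integral_Ioo, ← intervalIntegral.integral_of_le hc, integral_id,
      ← ENNReal.ofReal_ofNat 2, ← ENNReal.ofReal_mul zero_le_two,
      show 2 * ((c ^ 2 - 0 ^ 2) / 2) = c ^ 2 by ring, ENNReal.ofReal_pow hc,
      ENNReal.ofReal_toReal ha]

theorem lintegral_setLIntegral_Ioi_indicator_ofReal_lt [SFinite μ] {f : α → ℝ≥0∞}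
    (hf : Measurable f) {ψ : ℝ → ℝ≥0∞} (hψ : Measurable ψ) :
    ∫⁻ x, (∫⁻ t in Ioi (0 : ℝ), {t : ℝ | ENNReal.ofReal t < f x}.indicator ψ t) ∂μ =
      ∫⁻ t in Ioi (0 : ℝ), μ {x | ENNReal.ofReal t < f x} * ψ t := by
  have hmeas : Measurable (Function.uncurry fun x (t : ℝ) =>
      {t : ℝ | ENNReal.ofReal t < f x}.indicator ψ t) := by
    have hs : MeasurableSet {p : α × ℝ | ENNReal.ofReal p.2 < f p.1} :=
      measurableSet_lt (ENNReal.measurable_ofReal.comp measurable_snd) (hf.comp measurable_fst)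
    convert (hψ.comp measurable_snd).indicator hs using 1
    ext ⟨x, t⟩
    simp [indicator_apply]
  rw [lintegral_lintegral_swap hmeas.aemeasurable]
  refine lintegral_congr fun t => ?_
  have hslice : (fun x => {t : ℝ | ENNReal.ofReal t < f x}.indicator ψ t) =
      {x | ENNReal.ofReal t < f x}.indicator fun _ => ψ t := by
    ext x
    simp [indicator_apply]
  rw [hslice, lintegral_indicator_const (measurableSet_lt measurable_const hf), mul_comm]

theorem lintegral_eq_lintegral_meas_ofReal_lt [SFinite μ] {f : α → ℝ≥0∞} (hf : Measurable f) :
    ∫⁻ x, f x ∂μ = ∫⁻ t in Ioi (0 : ℝ), μ {x | ENNReal.ofReal t < f x} := by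
  simpa [setLIntegral_Ioi_indicator_ofReal_lt_one] using
    lintegral_setLIntegral_Ioi_indicator_ofReal_lt (μ := μ) hf measurable_one

theorem lintegral_sq_eq_lintegral_meas_ofReal_lt_mul [SFinite μ] {f : α → ℝ≥0∞}
    (hf : Measurable f) :
    ∫⁻ x, f x ^ 2 ∂μ =
      2 * ∫⁻ t in Ioi (0 : ℝ), μ {x | ENNReal.ofReal t < f x} * ENNReal.ofReal t := by
  simp_rw [← lintegral_setLIntegral_Ioi_indicator_ofReal_lt hf ENNReal.measurable_ofReal,
    ← two_mul_setLIntegral_Ioi_indicator_ofReal_lt]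
  exact lintegral_const_mul' 2 _ ENNReal.ofNat_ne_top

theorem tsum_mul_sq_eq_two_mul_setLIntegral {ι : Type*} [Countable ι] (c a : ι → ℝ≥0∞) :
    ∑' i, c i * a i ^ 2 = 2 * ∫⁻ t in Ioi (0 : ℝ),
      (∑' i, {i | ENNReal.ofReal t < a i}.indicator c i) * ENNReal.ofReal t := by
  have hmeas (i : ι) :
      Measurable fun t : ℝ => {t | ENNReal.ofReal t < a i}.indicator ENNReal.ofReal t :=
    ENNReal.measurable_ofReal.indicator (measurableSet_ofReal_lt _)
  calc ∑' i, c i * a i ^ 2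
      = ∑' i, 2 * ∫⁻ t in Ioi (0 : ℝ),
          c i * {t | ENNReal.ofReal t < a i}.indicator ENNReal.ofReal t := by
        refine tsum_congr fun i => ?_
        rw [lintegral_const_mul _ (hmeas i), ← two_mul_setLIntegral_Ioi_indicator_ofReal_lt]
        ring
    _ = _ := by
        rw [ENNReal.tsum_mul_left, ← lintegral_tsum fun i => ((hmeas i).const_mul _).aemeasurable]
        refine congrArg _ (lintegral_congr fun t => ?_)
        rw [← ENNReal.tsum_mul_right]
        refine tsum_congr fun i => ?_
        by_cases h : ENNReal.ofReal t < a i <;> simp [h]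

theorem tsum_mul_sq_le_of_le_meas_ofReal_lt [SFinite μ] {ι : Type*} [Countable ι]
    (c a : ι → ℝ≥0∞) {f : α → ℝ≥0∞} (hf : Measurable f) (A : ℝ≥0∞)
    (h : ∀ t : ℝ, ∑' i, {i | ENNReal.ofReal t < a i}.indicator c i ≤
      A * μ {x | ENNReal.ofReal t < f x}) :
    ∑' i, c i * a i ^ 2 ≤ A * ∫⁻ x, f x ^ 2 ∂μ := by
  have hanti : Antitone fun t : ℝ => μ {x | ENNReal.ofReal t < f x} := fun s t hst =>
    measure_mono fun x hx => (ENNReal.ofReal_le_ofReal hst).trans_lt hx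
  have hmeas : Measurable fun t : ℝ => μ {x | ENNReal.ofReal t < f x} * ENNReal.ofReal t :=
    hanti.measurable.mul ENNReal.measurable_ofReal
  rw [tsum_mul_sq_eq_two_mul_setLIntegral, lintegral_sq_eq_lintegral_meas_ofReal_lt_mul hf,
    mul_left_comm, ← lintegral_const_mul A hmeas]
  refine mul_le_mul_right (lintegral_mono fun t => ?_) 2
  rw [← mul_assoc]
  exact mul_le_mul_left (h t) _

theorem lintegral_sq_le_four_mul_of_mul_meas_lt_le [SFinite μ] {f M : α → ℝ≥0∞}
    (hf : Measurable f) (hM : Measurable M) (hM_fin : ∫⁻ x, M x ^ 2 ∂μ ≠ ⊤)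
    (h : ∀ t : ℝ, ENNReal.ofReal t * μ {x | ENNReal.ofReal t < M x} ≤
      ∫⁻ x in {x | ENNReal.ofReal t < M x}, f x ∂μ) :
    ∫⁻ x, M x ^ 2 ∂μ ≤ 4 * ∫⁻ x, f x ^ 2 ∂μ := by
  have hweak : ∫⁻ x, M x ^ 2 ∂μ ≤ 2 * ∫⁻ x, f x * M x ∂μ := by
    have hfM : ∫⁻ x, f x * M x ∂μ = ∫⁻ x, M x ∂μ.withDensity f :=
      (lintegral_withDensity_eq_lintegral_mul _ hf hM).symm
    rw [lintegral_sq_eq_lintegral_meas_ofReal_lt_mul hM, hfM,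
      lintegral_eq_lintegral_meas_ofReal_lt hM]
    gcongr with t
    rw [withDensity_apply _ (measurableSet_lt measurable_const hM), mul_comm]
    exact h t
  refine ENNReal.le_of_add_le_add_right hM_fin ?_
  calc ∫⁻ x, M x ^ 2 ∂μ + ∫⁻ x, M x ^ 2 ∂μ
      ≤ 4 * ∫⁻ x, f x * M x ∂μ := by
        rw [← two_mul, show (4 : ℝ≥0∞) = 2 * 2 by norm_num, mul_assoc]
        gcongr
    _ = ∫⁻ x, 4 * (f x * M x) ∂μ := (lintegral_const_mul _ (hf.mul hM)).symm
    _ ≤ ∫⁻ x, (4 * f x ^ 2 + M x ^ 2) ∂μ :=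
        lintegral_mono fun x => ENNReal.four_mul_mul_le_four_mul_sq_add_sq _ _
    _ = 4 * ∫⁻ x, f x ^ 2 ∂μ + ∫⁻ x, M x ^ 2 ∂μ := by
        rw [lintegral_add_left ((hf.pow_const 2).const_mul 4),
          lintegral_const_mul _ (hf.pow_const 2)]

end

namespace DyadicCube

variable {d : ℕ}

instance : Countable (DyadicCube d) :=
  Function.Injective.countable (f := fun Q : DyadicCube d => (Q.gen, Q.pos))
    fun Q Q' h => by cases Q; cases Q'; simpa using h

lemma toSet_eq_pi (Q : DyadicCube d) :
    Q.toSet = univ.pi fun i =>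
      Ico ((Q.pos i : ℝ) * 2 ^ (-Q.gen)) ((Q.pos i + 1) * 2 ^ (-Q.gen)) := by
  ext x
  simp [toSet]

lemma measurableSet_toSet (Q : DyadicCube d) : MeasurableSet Q.toSet := by
  rw [toSet_eq_pi]
  exact .univ_pi fun _ => measurableSet_Ico

lemma toSet_nonempty (Q : DyadicCube d) : Q.toSet.Nonempty := by
  rw [toSet_eq_pi]
  refine univ_pi_nonempty_iff.mpr fun i => nonempty_Ico.mpr ?_
  have : (0 : ℝ) < 2 ^ (-Q.gen) := by positivity
  linarith

lemma vol_eq (Q : DyadicCube d) : Q.vol = ENNReal.ofReal (2 ^ (-Q.gen)) ^ d := by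
  rw [vol, toSet_eq_pi, volume_pi_pi]
  simp only [Real.volume_Ico, add_mul, one_mul, add_sub_cancel_left, Finset.prod_const,
    Finset.card_univ, Fintype.card_fin]

lemma vol_ne_zero (Q : DyadicCube d) : Q.vol ≠ 0 := by
  rw [vol_eq]
  exact pow_ne_zero _ (ENNReal.ofReal_pos.mpr (by positivity)).ne'

lemma vol_ne_top (Q : DyadicCube d) : Q.vol ≠ ⊤ := by
  rw [vol_eq]
  exact ENNReal.pow_ne_top ENNReal.ofReal_ne_top

lemma In.refl (Q : DyadicCube d) : Q.In Q := ⟨le_rfl, subset_rfl⟩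

lemma In.trans {Q R S : DyadicCube d} (hQR : Q.In R) (hRS : R.In S) : Q.In S :=
  ⟨hRS.1.trans hQR.1, hQR.2.trans hRS.2⟩

lemma In.of_mem {Q R : DyadicCube d} {x : Fin d → ℝ} (hQ : x ∈ Q.toSet) (hR : x ∈ R.toSet)
    (h : R.gen ≤ Q.gen) : Q.In R := by
  refine ⟨h, fun y hy i => ?_⟩
  obtain ⟨k, hk⟩ : ∃ k : ℕ, Q.gen = R.gen + k := ⟨(Q.gen - R.gen).toNat, by omega⟩
  have hRs : (2 : ℝ) ^ (-R.gen) = 2 ^ k * 2 ^ (-Q.gen) := by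
    rw [hk, neg_add, zpow_add₀ two_ne_zero, zpow_neg (a := (2 : ℝ)) (k : ℤ), zpow_natCast]
    field_simp
  set s : ℝ := 2 ^ (-Q.gen)
  have hs : 0 < s := by positivity
  obtain ⟨hQ₁, hQ₂⟩ := hQ i
  obtain ⟨hR₁, hR₂⟩ := hR i
  obtain ⟨hy₁, hy₂⟩ := hy i
  rw [hRs] at hR₁ hR₂ ⊢
  have h₁ : R.pos i * 2 ^ k < Q.pos i + 1 := by
    exact_mod_cast (show (R.pos i : ℝ) * 2 ^ k < Q.pos i + 1 by nlinarith)
  have h₂ : Q.pos i < (R.pos i + 1) * 2 ^ k := by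
    exact_mod_cast (show (Q.pos i : ℝ) < (R.pos i + 1) * 2 ^ k by nlinarith)
  have h₁' : (R.pos i : ℝ) * 2 ^ k ≤ Q.pos i := by exact_mod_cast Int.lt_add_one_iff.mp h₁
  have h₂' : (Q.pos i : ℝ) + 1 ≤ (R.pos i + 1) * 2 ^ k := by exact_mod_cast h₂
  constructor <;> nlinarith

lemma eq_of_gen_eq_of_mem {Q R : DyadicCube d} {x : Fin d → ℝ} (hQ : x ∈ Q.toSet)
    (hR : x ∈ R.toSet) (h : Q.gen = R.gen) : Q = R := by
  obtain ⟨g, p⟩ := Q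
  obtain ⟨g', p'⟩ := R
  obtain rfl : g = g' := h
  refine congrArg _ (funext fun i => ?_)
  have hs : (0 : ℝ) < 2 ^ (-g) := by positivity
  obtain ⟨hQ₁, hQ₂⟩ := hQ i
  obtain ⟨hR₁, hR₂⟩ := hR i
  have h₁ : p i < p' i + 1 := by exact_mod_cast (show (p i : ℝ) < p' i + 1 by nlinarith)
  have h₂ : p' i < p i + 1 := by exact_mod_cast (show (p' i : ℝ) < p i + 1 by nlinarith)
  omega

theorem exists_pairwiseDisjoint_maximal {P₀ : DyadicCube d} {S : Set (DyadicCube d)}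
    (hS : ∀ Q ∈ S, Q.In P₀) :
    ∃ T ⊆ S, T.PairwiseDisjoint toSet ∧ (⋃ R ∈ T, R.toSet) = ⋃ Q ∈ S, Q.toSet ∧
      ∀ Q ∈ S, ∃ R ∈ T, Q.In R := by
  set T := {R ∈ S | ∀ R' ∈ S, R.In R' → R' = R}
  have hcover : ∀ Q ∈ S, ∃ R ∈ T, Q.In R := by
    intro Q hQ
    -- a cube of `S` above `Q` of least generation; generations are bounded below by `P₀.gen`
    let depth : DyadicCube d → ℕ := fun R => (R.gen - P₀.gen).toNat
    have hU : {R ∈ S | Q.In R}.Nonempty := ⟨Q, hQ, In.refl Q⟩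
    set R := Function.argminOn depth _ hU
    obtain ⟨hRS, hQR⟩ : R ∈ {R ∈ S | Q.In R} := Function.argminOn_mem depth _ hU
    refine ⟨R, ⟨hRS, fun R' hR'S hRR' => ?_⟩, hQR⟩
    have hmin : ¬(R'.gen - P₀.gen).toNat < (R.gen - P₀.gen).toNat :=
      Function.not_lt_argminOn depth {R ∈ S | Q.In R} ⟨hR'S, hQR.trans hRR'⟩
    have := (hS R' hR'S).1
    have := hRR'.1
    obtain ⟨x, hx⟩ := toSet_nonempty R
    exact eq_of_gen_eq_of_mem (hRR'.2 hx) hx (by omega)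
  refine ⟨T, fun R hR => hR.1, fun R hR R' hR' hne => ?_, ?_, hcover⟩
  · refine disjoint_left.mpr fun x hxR hxR' => hne ?_
    rcases le_total R.gen R'.gen with h | h
    · exact hR'.2 R hR.1 (In.of_mem hxR' hxR h)
    · exact (hR.2 R' hR'.1 (In.of_mem hxR hxR' h)).symm
  · refine (biUnion_subset_biUnion_left fun R hR => hR.1).antisymm
      (iUnion₂_subset fun Q hQ => ?_)
    obtain ⟨R, hRT, hQR⟩ := hcover Q hQ
    exact hQR.2.trans (subset_biUnion_of_mem hRT)

theorem Carleson.tsum_indicator_le {P₀ : DyadicCube d} {α : DyadicCube d → ℝ≥0∞} {A : ℝ≥0∞}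
    (hα : Carleson P₀ α A) {S : Set (DyadicCube d)} (hS : ∀ Q ∈ S, Q.In P₀) :
    ∑' Q, S.indicator (fun Q => α Q * Q.vol) Q ≤ A * volume (⋃ Q ∈ S, Q.toSet) := by
  obtain ⟨T, hTS, hT, hU, hcover⟩ := exists_pairwiseDisjoint_maximal hS
  calc ∑' Q, S.indicator (fun Q => α Q * Q.vol) Q
      ≤ ∑' Q, ∑' R : T, {Q : DyadicCube d | Q.In R}.indicator (fun Q => α Q * Q.vol) Q := by
        refine ENNReal.tsum_le_tsum fun Q => ?_
        by_cases hQ : Q ∈ S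
        · obtain ⟨R, hRT, hQR⟩ := hcover Q hQ
          refine le_of_eq_of_le ?_ (ENNReal.le_tsum ⟨R, hRT⟩)
          rw [indicator_of_mem hQ, indicator_of_mem (show Q ∈ {Q | Q.In R} from hQR)]
        · simp [indicator_of_notMem hQ]
    _ = ∑' R : T, ∑' Q : {Q : DyadicCube d // Q.In R}, α Q * Q.1.vol := by
        rw [ENNReal.tsum_comm]
        exact tsum_congr fun R => (tsum_subtype {Q : DyadicCube d | Q.In R} _).symm
    _ ≤ ∑' R : T, A * R.1.vol := ENNReal.tsum_le_tsum fun R => hα R (hS R (hTS R.2))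
    _ = A * volume (⋃ Q ∈ S, Q.toSet) := by
        rw [← hU, measure_biUnion T.to_countable hT fun R _ => measurableSet_toSet R,
          ENNReal.tsum_mul_left]
        rfl

lemma mul_vol_le_of_lt_avg {Q : DyadicCube d} {g : (Fin d → ℝ) → ℝ≥0∞} {t : ℝ≥0∞}
    (h : t < Q.avg g) : t * Q.vol ≤ ∫⁻ x in Q.toSet, g x :=
  ((ENNReal.lt_div_iff_mul_lt (.inl Q.vol_ne_zero) (.inl Q.vol_ne_top)).mp h).le

theorem mul_volume_biUnion_le_of_lt_avg {P₀ : DyadicCube d} {S : Set (DyadicCube d)}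
    (hS : ∀ Q ∈ S, Q.In P₀) {g : (Fin d → ℝ) → ℝ≥0∞} {t : ℝ≥0∞} (ht : ∀ Q ∈ S, t < Q.avg g) :
    t * volume (⋃ Q ∈ S, Q.toSet) ≤ ∫⁻ x in ⋃ Q ∈ S, Q.toSet, g x := by
  obtain ⟨T, hTS, hT, hU, -⟩ := exists_pairwiseDisjoint_maximal hS
  rw [← hU, measure_biUnion T.to_countable hT fun R _ => measurableSet_toSet R,
    lintegral_biUnion T.to_countable (fun R _ => measurableSet_toSet R) hT,
    ← ENNReal.tsum_mul_left]
  exact ENNReal.tsum_le_tsum fun R => mul_vol_le_of_lt_avg (ht R (hTS R.2))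

def subcubesUpTo (P₀ : DyadicCube d) (N : ℕ) : Set (DyadicCube d) :=
  {Q | Q.In P₀ ∧ Q.gen ≤ P₀.gen + N}

lemma monotone_subcubesUpTo (P₀ : DyadicCube d) : Monotone (subcubesUpTo P₀) :=
  fun _ _ hN _ hQ => ⟨hQ.1, hQ.2.trans (by gcongr)⟩

lemma iUnion_subcubesUpTo (P₀ : DyadicCube d) :
    ⋃ N, subcubesUpTo P₀ N = {Q : DyadicCube d | Q.In P₀} :=
  (iUnion_subset fun _ _ hQ => hQ.1).antisymm fun Q hQ =>
    mem_iUnion.mpr ⟨(Q.gen - P₀.gen).toNat, hQ, by omega⟩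

lemma avg_le_of_mem_subcubesUpTo {P₀ Q : DyadicCube d} {N : ℕ} (hQ : Q ∈ subcubesUpTo P₀ N)
    (g : (Fin d → ℝ) → ℝ≥0∞) :
    Q.avg g ≤ (∫⁻ x in P₀.toSet, g x) / ENNReal.ofReal (2 ^ (-(P₀.gen + N))) ^ d := by
  refine ENNReal.div_le_div (lintegral_mono_set hQ.1.2) ?_
  rw [vol_eq]
  gcongr
  · exact one_le_two
  · exact hQ.2

def maximalFunction (𝒬 : Set (DyadicCube d)) (g : (Fin d → ℝ) → ℝ≥0∞) (x : Fin d → ℝ) :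
    ℝ≥0∞ :=
  ⨆ Q ∈ 𝒬, Q.toSet.indicator (fun _ => Q.avg g) x

lemma measurable_maximalFunction (𝒬 : Set (DyadicCube d)) (g : (Fin d → ℝ) → ℝ≥0∞) :
    Measurable (maximalFunction 𝒬 g) :=
  .biSup _ 𝒬.to_countable fun Q _ => measurable_const.indicator Q.measurableSet_toSet

lemma setOf_lt_maximalFunction (𝒬 : Set (DyadicCube d)) (g : (Fin d → ℝ) → ℝ≥0∞)
    (t : ℝ≥0∞) : {x | t < maximalFunction 𝒬 g x} = ⋃ Q ∈ 𝒬 ∩ {Q | t < Q.avg g}, Q.toSet := by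
  ext x
  simp only [maximalFunction, mem_ofPred_eq, lt_iSup_iff, mem_iUnion, mem_inter_iff, exists_prop]
  refine exists_congr fun Q => ?_
  by_cases hx : x ∈ Q.toSet <;> simp [hx]

lemma setOf_lt_maximalFunction_subset {P₀ : DyadicCube d} {𝒬 : Set (DyadicCube d)}
    (h𝒬 : ∀ Q ∈ 𝒬, Q.In P₀) (g : (Fin d → ℝ) → ℝ≥0∞) (t : ℝ≥0∞) :
    {x | t < maximalFunction 𝒬 g x} ⊆ P₀.toSet := by
  rw [setOf_lt_maximalFunction]
  exact iUnion₂_subset fun Q hQ => (h𝒬 Q hQ.1).2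

lemma maximalFunction_le {𝒬 : Set (DyadicCube d)} {g : (Fin d → ℝ) → ℝ≥0∞} {C : ℝ≥0∞}
    (h : ∀ Q ∈ 𝒬, Q.avg g ≤ C) (x : Fin d → ℝ) : maximalFunction 𝒬 g x ≤ C :=
  iSup₂_le fun Q hQ => (indicator_le_self' (fun _ _ => zero_le) x).trans (h Q hQ)

theorem lintegral_maximalFunction_sq_le (P₀ : DyadicCube d) (N : ℕ)
    {g : (Fin d → ℝ) → ℝ≥0∞} (hg : Measurable g) :
    ∫⁻ x in P₀.toSet, maximalFunction (subcubesUpTo P₀ N) g x ^ 2 ≤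
      4 * ∫⁻ x in P₀.toSet, g x ^ 2 := by
  set M := maximalFunction (subcubesUpTo P₀ N) g
  have hM := measurable_maximalFunction (subcubesUpTo P₀ N) g
  rcases eq_or_ne (∫⁻ x in P₀.toSet, g x ^ 2) ⊤ with hG | hG
  · simp [hG]
  have : IsFiniteMeasure (volume.restrict P₀.toSet) :=
    isFiniteMeasure_restrict.mpr P₀.vol_ne_top
  set C := (∫⁻ x in P₀.toSet, g x) / ENNReal.ofReal (2 ^ (-(P₀.gen + N))) ^ d
  have hC : C ≠ ⊤ := ENNReal.div_ne_top (lintegral_ne_top_of_lintegral_sq_ne_top hG)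
    (pow_ne_zero _ (ENNReal.ofReal_pos.mpr (by positivity)).ne')
  have hMC (x : Fin d → ℝ) : M x ≤ C :=
    maximalFunction_le (fun Q hQ => avg_le_of_mem_subcubesUpTo hQ g) x
  have hM_fin : ∫⁻ x in P₀.toSet, M x ^ 2 ≠ ⊤ := by
    refine ne_top_of_le_ne_top ?_ (lintegral_mono fun x => pow_le_pow_left₀ zero_le (hMC x) 2)
    rw [lintegral_const, Measure.restrict_apply_univ]
    exact ENNReal.mul_ne_top (ENNReal.pow_ne_top hC) P₀.vol_ne_top
  refine lintegral_sq_le_four_mul_of_mul_meas_lt_le hg hM hM_fin fun t => ?_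
  have hsub := setOf_lt_maximalFunction_subset (𝒬 := subcubesUpTo P₀ N) (fun Q hQ => hQ.1) g
    (ENNReal.ofReal t)
  rw [Measure.restrict_apply (measurableSet_lt measurable_const hM),
    Measure.restrict_restrict (measurableSet_lt measurable_const hM),
    inter_eq_left.mpr hsub, setOf_lt_maximalFunction]
  exact mul_volume_biUnion_le_of_lt_avg (fun Q hQ => hQ.1.1) fun Q hQ => hQ.2

theorem Carleson.tsum_indicator_subcubesUpTo_le {P₀ : DyadicCube d}
    {α : DyadicCube d → ℝ≥0∞} {A : ℝ≥0∞} (hα : Carleson P₀ α A)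
    {g : (Fin d → ℝ) → ℝ≥0∞} (hg : Measurable g) (N : ℕ) :
    ∑' Q, (subcubesUpTo P₀ N).indicator (fun Q => α Q * Q.avg g ^ 2 * Q.vol) Q ≤
      4 * A * ∫⁻ x in P₀.toSet, g x ^ 2 := by
  set 𝒬 := subcubesUpTo P₀ N
  have hM := measurable_maximalFunction 𝒬 g
  calc ∑' Q, 𝒬.indicator (fun Q => α Q * Q.avg g ^ 2 * Q.vol) Q
      = ∑' Q, 𝒬.indicator (fun Q => α Q * Q.vol) Q * Q.avg g ^ 2 := by
        refine tsum_congr fun Q => ?_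
        by_cases hQ : Q ∈ 𝒬
        · simp only [indicator_of_mem hQ]
          ring
        · simp [indicator_of_notMem hQ]
    _ ≤ A * ∫⁻ x in P₀.toSet, maximalFunction 𝒬 g x ^ 2 := by
        refine tsum_mul_sq_le_of_le_meas_ofReal_lt _ _ hM A fun t => ?_
        rw [indicator_indicator, Measure.restrict_apply (measurableSet_lt measurable_const hM),
          inter_eq_left.mpr (setOf_lt_maximalFunction_subset (fun Q hQ => hQ.1) g _),
          setOf_lt_maximalFunction, inter_comm]
        exact hα.tsum_indicator_le fun Q hQ => hQ.1.1
    _ ≤ A * (4 * ∫⁻ x in P₀.toSet, g x ^ 2) := by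
        gcongr
        exact lintegral_maximalFunction_sq_le P₀ N hg
    _ = 4 * A * ∫⁻ x in P₀.toSet, g x ^ 2 := by ring

end DyadicCube

/-- linear dyadic Carleson embedding:
`Σ_{Q ∈ 𝒟(P₀)} α_Q ⟨g⟩_Q² |Q| ≤ 4‖α‖ ‖g‖²_{L²(P₀)}`. -/
theorem linear_carleson_embedding {d : ℕ} (P₀ : DyadicCube d)
    (α : DyadicCube d → ℝ≥0∞) (A : ℝ≥0∞) (hα : Carleson P₀ α A)
    (g : (Fin d → ℝ) → ℝ≥0∞) (hg : Measurable g) :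
    ∑' Q : {Q : DyadicCube d // Q.In P₀},
        α Q.1 * ((Q : DyadicCube d).avg g) ^ 2 * (Q : DyadicCube d).vol ≤
      4 * A * ∫⁻ x in P₀.toSet, (g x) ^ 2 := by
  set F := fun Q : DyadicCube d => α Q * Q.avg g ^ 2 * Q.vol
  calc _ = ∑' Q, {Q : DyadicCube d | Q.In P₀}.indicator F Q := tsum_subtype _ F
    _ = ⨆ N, ∑' Q, (subcubesUpTo P₀ N).indicator F Q := by
        simp_rw [← iUnion_subcubesUpTo P₀, indicator_iUnion_apply (M := ℝ≥0∞) rfl]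
        exact ENNReal.tsum_iSup_of_monotone fun Q N N' hN =>
          indicator_le_indicator_of_subset (monotone_subcubesUpTo P₀ hN) (fun _ => zero_le) Q
    _ ≤ _ := iSup_le (hα.tsum_indicator_subcubesUpTo_le hg)
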